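/- arXiv:0810.0786 — 6 statements merged into one kernel-verified Lean document; each statement's English description precedes it below -/
import Mathlib

section
/- Let $a : \mathbb{N} \to \mathbb{R}$ with $a_j > 0$ for all $j$, and $b : \mathbb{N} \to \mathbb{R}$ with $|b_j| \le C$ for all $j$ and some constant $C$. Assume there exists $j_0 \ge 1$ such that $a_{j-1} a_{j+1} \le a_j^2$ for all $j \ge j_0$, and assume $\sum_{j=0}^{\infty} 1/a_j < \infty$. Let $L$ be the densely defined operator on $\ell^2(\mathbb{N};\mathbb{C})$ whose domain is the set of finitely supported sequences and which acts by $(Lu)_j = a_{j-1} u_{j-1} + b_j u_j + a_j u_{j+1}$ (with the convention $a_{-1} u_{-1} = 0$). Then $L$ is not essentially self-adjoint; that is, the closure of $L$ is not a self-adjoint operator. -/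
/-!
The values `P n = P_n(i)` of the orthonormal polynomials of the first kind solve `J P = i P`
formally, with `P 0 = 1`. Put `z n = √(a n) ‖P n‖`. The three-term recurrence, `|i - b n| ≤ K`
and log-concavity of `a`, which bounds `√(a (n + 1) / a n)` by a constant `ρ`, give
`z (n + 2) ≤ (K ρ / a (n + 1)) z (n + 1) + z n`; by the discrete Grönwall inequality `z` is
bounded, so `‖P n‖² ≤ B² / a n` is summable. Summation by parts against finitely supported
vectors makes `P ∈ ℓ²` an eigenvector of `(closure L)†` for the eigenvalue `i`, which is
impossible when `closure L` is self-adjoint.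
-/

noncomputable section

/-- The Hilbert space `ℓ²(ℕ; ℂ)`. -/
abbrev H1 : Type := lp (fun _ : ℕ => ℂ) 2

open Finset Filter ComplexConjugate

namespace LinearPMap

variable {𝕜 E F : Type*} [RCLike 𝕜] [NormedAddCommGroup E] [InnerProductSpace 𝕜 E]
  [NormedAddCommGroup F] [InnerProductSpace 𝕜 F]

theorem inner_closure_apply_eq {T : E →ₗ.[𝕜] F} {w : E} {y : F}
    (h : ∀ x : T.domain, inner 𝕜 w (x : E) = inner 𝕜 y (T x)) (x : T.closure.domain) :
    inner 𝕜 w (x : E) = inner 𝕜 y (T.closure x) := by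
  have graph_subset : (T.closure.graph : Set (E × F)) ⊆ _root_.closure T.graph := by
    by_cases hT : T.IsClosable
    · rw [← hT.graph_closure_eq_closure_graph, Submodule.topologicalClosure_coe]
    · rw [closure_def' hT]
      exact subset_closure
  have closed : _root_.IsClosed {p : E × F | inner 𝕜 w p.1 = inner 𝕜 y p.2} :=
    isClosed_eq (continuous_const.inner continuous_fst)
      (continuous_const.inner continuous_snd)
  have graph_sub :
      (T.graph : Set (E × F)) ⊆ {p : E × F | inner 𝕜 w p.1 = inner 𝕜 y p.2} := by
    rintro ⟨x₁, x₂⟩ hp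
    obtain ⟨x, rfl, rfl⟩ := T.mem_graph_iff.1 hp
    exact h x
  exact closure_minimal graph_sub closed (graph_subset (T.closure.mem_graph x))

end LinearPMap

section SelfAdjoint

open LinearPMap

variable {𝕜 E : Type*} [RCLike 𝕜] [NormedAddCommGroup E] [InnerProductSpace 𝕜 E]
  [CompleteSpace E]

theorem IsSelfAdjoint.eq_zero_of_forall_inner_eq {A : E →ₗ.[𝕜] E} (hA : IsSelfAdjoint A)
    {y : E} {z : 𝕜} (hz : conj z ≠ z)
    (h : ∀ x : A.domain, inner 𝕜 (z • y) (x : E) = inner 𝕜 y (A x)) :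
    y = 0 := by
  have hA' : A† = A := hA
  have hy : y ∈ A†.domain := mem_adjoint_domain_of_exists y ⟨z • y, h⟩
  have hAy : A† ⟨y, hy⟩ = z • y := adjoint_apply_eq hA.dense_domain _ h
  have hy' : y ∈ A.domain := hA' ▸ hy
  have hAy' : A ⟨y, hy'⟩ = z • y := by
    rw [← hAy]
    exact hA'.ge.2 rfl
  have := h ⟨y, hy'⟩
  rw [hAy', inner_smul_left, inner_smul_right] at this
  have hyy : inner 𝕜 y y = (0 : 𝕜) := by
    by_contra hne
    exact hz (mul_right_cancel₀ hne this)
  exact inner_self_eq_zero.1 hyy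

end SelfAdjoint

def LogConcaveFrom (s : ℕ → ℝ) (m : ℕ) : Prop :=
  ∀ n, m ≤ n → s n * s (n + 2) ≤ s (n + 1) ^ 2

namespace LogConcaveFrom

variable {s : ℕ → ℝ} {m : ℕ}

theorem sqrt (hs : ∀ n, 0 ≤ s n) (h : LogConcaveFrom s m) :
    LogConcaveFrom (fun n => √(s n)) m := fun n hn => by
  rw [← Real.sqrt_mul (hs n), Real.sq_sqrt (hs _)]
  exact (Real.sqrt_le_sqrt (h n hn)).trans_eq (Real.sqrt_sq (hs _))

theorem le_div_mul (hs : ∀ n, 0 < s n) (h : LogConcaveFrom s m) {n : ℕ} (hn : m ≤ n) :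
    s (n + 1) ≤ s (m + 1) / s m * s n := by
  induction n, hn using Nat.le_induction with
  | base => rw [div_mul_cancel₀ _ (hs m).ne']
  | succ n hn ih =>
    refine le_of_mul_le_mul_right ?_ (hs n)
    calc s (n + 2) * s n = s n * s (n + 2) := mul_comm _ _
      _ ≤ s (n + 1) * s (n + 1) := by simpa only [sq] using h n hn
      _ ≤ s (n + 1) * (s (m + 1) / s m * s n) := by gcongr; exact (hs _).le
      _ = s (m + 1) / s m * s (n + 1) * s n := by ring

end LogConcaveFrom

theorem LogConcaveFrom.sqrt_mul_add_two_le {a p : ℕ → ℝ} {m : ℕ} {K : ℝ}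
    (hlc : LogConcaveFrom a m) (ha : ∀ n, 0 < a n) (hp : ∀ n, 0 ≤ p n) (hK : 0 ≤ K)
    (hrec : ∀ n, a (n + 1) * p (n + 2) ≤ K * p (n + 1) + a n * p n) {n : ℕ} (hn : m ≤ n) :
    √(a (n + 2)) * p (n + 2) ≤
      K * (√(a (m + 1)) / √(a m)) / a (n + 1) * (√(a (n + 1)) * p (n + 1)) +
        √(a n) * p n := by
  set s : ℕ → ℝ := fun n => √(a n)
  have hs : ∀ n, 0 < s n := fun n => Real.sqrt_pos.2 (ha n)
  have hsa : ∀ n, s n ^ 2 = a n := fun n => Real.sq_sqrt (ha n).le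
  have hratio : s (n + 2) ≤ s (m + 1) / s m * s (n + 1) :=
    (hlc.sqrt fun n => (ha n).le).le_div_mul hs (by omega)
  have hcross : s (n + 2) * a n ≤ a (n + 1) * s n := by
    have := (hlc.sqrt fun n => (ha n).le) n hn
    calc s (n + 2) * a n = s n * s (n + 2) * s n := by rw [← hsa n]; ring
      _ ≤ s (n + 1) ^ 2 * s n := by gcongr
      _ = a (n + 1) * s n := by rw [hsa]
  refine le_of_mul_le_mul_left ?_ (ha (n + 1))
  calc a (n + 1) * (s (n + 2) * p (n + 2)) = s (n + 2) * (a (n + 1) * p (n + 2)) := by ring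
    _ ≤ s (n + 2) * (K * p (n + 1) + a n * p n) := by grw [hrec n]
    _ = K * p (n + 1) * s (n + 2) + s (n + 2) * a n * p n := by ring
    _ ≤ K * p (n + 1) * (s (m + 1) / s m * s (n + 1)) + a (n + 1) * s n * p n := by
        gcongr
        · exact mul_nonneg hK (hp _)
        · exact hp n
    _ = a (n + 1) *
          (K * (s (m + 1) / s m) / a (n + 1) * (s (n + 1) * p (n + 1)) + s n * p n) := by
        field_simp [(ha (n + 1)).ne']

theorem exists_forall_le_of_le_mul_add {z ε : ℕ → ℝ} {m : ℕ} (hz : ∀ n, 0 ≤ z n)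
    (hε : ∀ n, 0 ≤ ε n) (hsum : Summable ε)
    (hrec : ∀ n, m ≤ n → z (n + 2) ≤ ε n * z (n + 1) + z n) :
    ∃ B, ∀ n, m ≤ n → z n ≤ B := by
  set M : ℕ → ℝ := fun n => max (z n) (z (n + 1))
  have hM : ∀ n ≥ m, M (n + 1) ≤ (1 + ε n) * M n + 0 := fun n hn => by
    have hMn : 0 ≤ M n := (hz n).trans (le_max_left _ _)
    rw [add_zero]
    refine max_le ?_ ?_
    · calc z (n + 1) ≤ M n := le_max_right _ _
        _ ≤ (1 + ε n) * M n := le_mul_of_one_le_left hMn (by linarith [hε n])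
    · calc z (n + 2) ≤ ε n * z (n + 1) + z n := hrec n hn
        _ ≤ ε n * M n + M n := by gcongr; exacts [hε n, le_max_right _ _, le_max_left _ _]
        _ = (1 + ε n) * M n := by ring
  refine ⟨M m * Real.exp (∑' i, ε i), fun n hn => ?_⟩
  calc z n ≤ M n := le_max_left _ _
    _ ≤ (M m + ∑ k ∈ Ico m n, (0 : ℝ)) * Real.exp (∑ i ∈ Ico m n, ε i) :=
        discrete_gronwall ((hz m).trans (le_max_left _ _)) hM (fun n _ => hε n)
          (fun _ _ => le_rfl) hn
    _ ≤ M m * Real.exp (∑' i, ε i) := by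
        rw [sum_const_zero, add_zero]
        gcongr
        · exact (hz m).trans (le_max_left _ _)
        · exact hsum.sum_le_tsum _ (fun i _ => hε i)

theorem lp.inner_eq_sum_range_of_eq_zero {𝕜 : Type*} [RCLike 𝕜]
    (x w : lp (fun _ : ℕ => 𝕜) 2) {N : ℕ} (hw : ∀ j, N ≤ j → w j = 0) :
    inner 𝕜 x w = ∑ j ∈ range N, conj (x j) * w j := by
  rw [lp.inner_eq_tsum,
    tsum_eq_sum (s := range N) fun j hj => by simp [hw j (by simpa using hj)]]
  exact sum_congr rfl fun j _ => mul_comm _ _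

def jacobiMulVec (a b : ℕ → ℝ) (u : ℕ → ℂ) (j : ℕ) : ℂ :=
  (if j = 0 then 0 else (a (j - 1) : ℂ) * u (j - 1)) + (b j : ℂ) * u j + (a j : ℂ) * u (j + 1)

theorem sum_mul_jacobiMulVec (a b : ℕ → ℝ) (y v : ℕ → ℂ) (N : ℕ) :
    ∑ j ∈ range (N + 1), y j * jacobiMulVec a b v j =
      ∑ j ∈ range (N + 1), jacobiMulVec a b y j * v j +
        a N * (y N * v (N + 1) - y (N + 1) * v N) := by
  induction N with
  | zero => simp [jacobiMulVec]; ring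
  | succ N ih =>
    rw [sum_range_succ, ih, sum_range_succ _ (N + 1)]
    simp only [jacobiMulVec, Nat.succ_ne_zero, if_false, Nat.add_sub_cancel]
    ring

theorem sum_mul_jacobiMulVec_of_eq_zero (a b : ℕ → ℝ) (y v : ℕ → ℂ) {N : ℕ}
    (hv : ∀ j, N ≤ j → v j = 0) :
    ∑ j ∈ range (N + 1), y j * jacobiMulVec a b v j =
      ∑ j ∈ range (N + 1), jacobiMulVec a b y j * v j := by
  rw [sum_mul_jacobiMulVec, hv N le_rfl, hv (N + 1) N.le_succ]
  ring

theorem conj_jacobiMulVec (a b : ℕ → ℝ) (u : ℕ → ℂ) (j : ℕ) :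
    conj (jacobiMulVec a b u j) = jacobiMulVec a b (fun i => conj (u i)) j := by
  simp only [jacobiMulVec, map_add, map_mul, apply_ite conj, map_zero, Complex.conj_ofReal]

theorem inner_eq_inner_apply_of_jacobiMulVec {a b : ℕ → ℝ} (L : H1 →ₗ.[ℂ] H1)
    (hfin : ∀ v : L.domain, {j | (v : H1) j ≠ 0}.Finite)
    (hact : ∀ (v : L.domain) j, (L v : H1) j = jacobiMulVec a b (v : H1) j) {u w : H1}
    (hw : ∀ j, w j = jacobiMulVec a b u j) (v : L.domain) :
    inner ℂ w (v : H1) = inner ℂ u (L v) := by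
  obtain ⟨B, hB⟩ := (hfin v).bddAbove
  have hv : ∀ j, B + 1 ≤ j → (v : H1) j = 0 := fun j hj => by
    by_contra h
    have := hB h
    omega
  have hLv : ∀ j, B + 2 ≤ j → (L v : H1) j = 0 := fun j hj => by
    rw [hact, jacobiMulVec, if_neg (by omega), hv _ (by omega), hv _ (by omega),
      hv _ (by omega)]
    simp
  rw [lp.inner_eq_sum_range_of_eq_zero w _ (N := B + 2) fun j hj => hv j (by omega),
    lp.inner_eq_sum_range_of_eq_zero u _ hLv]
  simp only [hact v, hw, conj_jacobiMulVec]
  exact (sum_mul_jacobiMulVec_of_eq_zero a b _ _ hv).symm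

/-- `n ↦ P_n(z)`, the orthonormal polynomials of the first kind of the Jacobi matrix at `z`. -/
def jacobiFirstKind (a b : ℕ → ℝ) (z : ℂ) : ℕ → ℂ
  | 0 => 1
  | 1 => (z - b 0) / a 0
  | n + 2 =>
    ((z - b (n + 1)) * jacobiFirstKind a b z (n + 1) - a n * jacobiFirstKind a b z n) / a (n + 1)

@[simp]
theorem jacobiFirstKind_zero (a b : ℕ → ℝ) (z : ℂ) : jacobiFirstKind a b z 0 = 1 := rfl

section JacobiFirstKind

variable {a : ℕ → ℝ} (b : ℕ → ℝ) (ha : ∀ j, 0 < a j) (z : ℂ)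
include ha

theorem mul_jacobiFirstKind_one : (a 0 : ℂ) * jacobiFirstKind a b z 1 = z - b 0 :=
  mul_div_cancel₀ _ (Complex.ofReal_ne_zero.2 (ha 0).ne')

theorem mul_jacobiFirstKind_add_two (n : ℕ) :
    (a (n + 1) : ℂ) * jacobiFirstKind a b z (n + 2) =
      (z - b (n + 1)) * jacobiFirstKind a b z (n + 1) - a n * jacobiFirstKind a b z n :=
  mul_div_cancel₀ _ (Complex.ofReal_ne_zero.2 (ha _).ne')

theorem jacobiMulVec_jacobiFirstKind (j : ℕ) :
    jacobiMulVec a b (jacobiFirstKind a b z) j = z * jacobiFirstKind a b z j := by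
  rcases j with _ | n
  · simp only [jacobiMulVec, if_true, jacobiFirstKind_zero]
    linear_combination mul_jacobiFirstKind_one b ha z
  · simp only [jacobiMulVec, Nat.succ_ne_zero, if_false, Nat.add_sub_cancel]
    linear_combination mul_jacobiFirstKind_add_two b ha z n

theorem mul_norm_jacobiFirstKind_le {K : ℝ} (hK : ∀ j, ‖z - b j‖ ≤ K) (n : ℕ) :
    a (n + 1) * ‖jacobiFirstKind a b z (n + 2)‖ ≤
      K * ‖jacobiFirstKind a b z (n + 1)‖ + a n * ‖jacobiFirstKind a b z n‖ := by
  have hnorm : ∀ k, ‖(a k : ℂ)‖ = a k := fun k => by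
    rw [Complex.norm_real, Real.norm_of_nonneg (ha k).le]
  calc a (n + 1) * ‖jacobiFirstKind a b z (n + 2)‖
      = ‖(z - b (n + 1)) * jacobiFirstKind a b z (n + 1) - a n * jacobiFirstKind a b z n‖ := by
        rw [← mul_jacobiFirstKind_add_two b ha, norm_mul, hnorm]
    _ ≤ ‖z - b (n + 1)‖ * ‖jacobiFirstKind a b z (n + 1)‖ +
          a n * ‖jacobiFirstKind a b z n‖ := by
        grw [norm_sub_le, norm_mul, norm_mul, hnorm]
    _ ≤ K * ‖jacobiFirstKind a b z (n + 1)‖ + a n * ‖jacobiFirstKind a b z n‖ := by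
        grw [hK]

theorem memℓp_jacobiFirstKind {C : ℝ} (hb : ∀ j, |b j| ≤ C) {m : ℕ}
    (hlc : LogConcaveFrom a m) (hsum : Summable fun j => 1 / a j) :
    Memℓp (jacobiFirstKind a b z) 2 := by
  set p : ℕ → ℝ := fun n => ‖jacobiFirstKind a b z n‖
  set K := ‖z‖ + C
  have hK : ∀ j, ‖z - b j‖ ≤ K := fun j => by
    grw [norm_sub_le, Complex.norm_real, Real.norm_eq_abs, hb j]
  have hK0 : 0 ≤ K := (norm_nonneg _).trans (hK 0)
  obtain ⟨B, hB⟩ := exists_forall_le_of_le_mul_add (z := fun n => √(a n) * p n)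
    (ε := fun n => K * (√(a (m + 1)) / √(a m)) / a (n + 1)) (fun n => by positivity)
    (fun n => div_nonneg (by positivity) (ha _).le)
    ((((summable_nat_add_iff 1).2 hsum).mul_left _).congr fun n => mul_one_div _ _)
    (fun n hn => hlc.sqrt_mul_add_two_le ha (fun n => norm_nonneg _) hK0
      (mul_norm_jacobiFirstKind_le b ha z hK) hn)
  have hbound : ∀ n, m ≤ n → ‖p n ^ 2‖ ≤ B ^ 2 * (1 / a n) := fun n hn => by
    have h := pow_le_pow_left₀ (by positivity) (hB n hn) 2
    rw [mul_pow, Real.sq_sqrt (ha n).le] at h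
    rw [Real.norm_of_nonneg (by positivity), mul_one_div, le_div_iff₀ (ha n)]
    linarith
  refine memℓp_gen ?_
  simp only [ENNReal.toReal_ofNat, Real.rpow_two]
  exact (hsum.mul_left (B ^ 2)).of_norm_bounded_eventually_nat
    (eventually_atTop.2 ⟨m, hbound⟩)

end JacobiFirstKind

/-- **Berezanskii's theorem.** Let `L` be the densely defined operator on `ℓ²(ℕ;ℂ)`
with domain the finitely supported sequences, acting as the infinite Jacobi matrix
`(Lu)_j = a_{j-1}u_{j-1} + b_j u_j + a_j u_{j+1}` (convention `a_{-1}u_{-1} = 0`),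
where `a_j > 0`, `|b_j| ≤ C`, `a_{j-1}a_{j+1} ≤ a_j²` from some index on, and
`∑ 1/a_j < ∞`.  Then `L` is not essentially self-adjoint: its closure is not
self-adjoint. -/
theorem jacobi_matrix_not_essentially_selfAdjoint
    (a b : ℕ → ℝ)
    (ha : ∀ j, 0 < a j)
    (hb : ∃ C : ℝ, ∀ j, |b j| ≤ C)
    (hlc : ∃ j₀ : ℕ, 1 ≤ j₀ ∧ ∀ j, j₀ ≤ j → a (j - 1) * a (j + 1) ≤ (a j) ^ 2)
    (hsum : Summable (fun j => 1 / a j))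
    (L : H1 →ₗ.[ℂ] H1)
    (hdom : ∀ u : H1, u ∈ L.domain ↔ {j : ℕ | u j ≠ 0}.Finite)
    (hact : ∀ u : L.domain, ∀ j : ℕ,
      (L u : H1) j =
        (if j = 0 then 0 else (a (j - 1) : ℂ) * (u : H1) (j - 1)) +
          (b j : ℂ) * (u : H1) j + (a j : ℂ) * (u : H1) (j + 1)) :
    ¬ IsSelfAdjoint L.closure := by
  intro hsa
  obtain ⟨C, hC⟩ := hb
  obtain ⟨j₀, -, hlc⟩ := hlc
  have hlc' : LogConcaveFrom a (j₀ - 1) := fun n hn => by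
    simpa using hlc (n + 1) (by omega)
  let u : H1 := ⟨jacobiFirstKind a b Complex.I,
    memℓp_jacobiFirstKind b ha Complex.I hC hlc' hsum⟩
  have hu_adjoint : ∀ v : L.domain, inner ℂ (Complex.I • u) (v : H1) = inner ℂ u (L v) :=
    inner_eq_inner_apply_of_jacobiMulVec L (fun v => (hdom v).1 v.2) hact
      fun j => (jacobiMulVec_jacobiFirstKind b ha Complex.I j).symm
  have hu : u = 0 := hsa.eq_zero_of_forall_inner_eq (by norm_num [Complex.ext_iff])
    (L.inner_closure_apply_eq hu_adjoint)
  exact one_ne_zero (congrArg (fun x : H1 => x 0) hu)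
end
end

section
/- Fix $n \in \mathbb{N}$ with $n \ge 2$. Then the operator $J_n$ is symmetric but not essentially self-adjoint, and both of its deficiency indices equal $1$: $\dim_{\mathbb{C}} \ker(J_n^* - i\,\mathrm{id}) = 1$ and $\dim_{\mathbb{C}} \ker(J_n^* + i\,\mathrm{id}) = 1$. -/
noncomputable section

open scoped ComplexInnerProductSpace

/-- `β(m,n) = (1/2)·√(m+1)·(1-m-n)`. -/
def beta (m n : ℕ) : ℝ := (1 / 2) * Real.sqrt ((m : ℝ) + 1) * (1 - (m : ℝ) - (n : ℝ))

/-- The formal Jacobi action in the row `n`: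
`(J_n u)(m) = β(m,n) u(m+1) + β(m-1,n) u(m-1)`, with the convention `β(-1,n) = 0`. -/
def jacobiActRow (n : ℕ) (u : ℕ → ℂ) : ℕ → ℂ := fun m =>
  (beta m n : ℂ) * u (m + 1) +
    (if m = 0 then 0 else (beta (m - 1) n : ℂ) * u (m - 1))

/-!
`J_n` is a Jacobi matrix whose off-diagonal entries `β(m,n)` are negative, of size about
`m^{3/2}/2`, and `|β(m,n)|` is log-concave in `m`. Summation by parts against finitely supported vectors
(the boundary term is a discrete Wronskian) shows that `J_n` is symmetric and that `J_n^*` is the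
maximal operator: `J_n^* u = v` exactly when the formal Jacobi action sends `u` to `v`. So
`ker (J_n^* - z)` consists of the square-summable solutions of the three-term recurrence
`J_n u = z u`, and it has dimension at most one because a solution is determined by `u 0`.
Berezanskii's argument shows that every solution is square-summable: by log-concavity and a
discrete Grönwall inequality `|u k| * √|β(k,n)|` stays bounded, so `|u k|²` is dominated by the
summable sequence `1 / |β(k,n)|`. Both deficiency indices are therefore `1`. Finally
`(closure J_n)^* = J_n^*`, so a self-adjoint closure would make `J_n^*` symmetric, and a symmetric
operator has no eigenvector for the eigenvalue `i`.
-/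

open ComplexConjugate Finset

namespace Submodule

variable {𝕜 E F : Type*} [RCLike 𝕜] [NormedAddCommGroup E] [InnerProductSpace 𝕜 E]
  [NormedAddCommGroup F] [InnerProductSpace 𝕜 F]

theorem adjoint_topologicalClosure (g : Submodule 𝕜 (E × F)) :
    g.topologicalClosure.adjoint = g.adjoint := by
  refine le_antisymm (fun x hx => ?_) (fun x hx => ?_) <;> rw [mem_adjoint_iff] at hx ⊢
  · exact fun a b hab => hx a b (g.le_topologicalClosure hab)
  · have hclosed : IsClosed {p : E × F | inner 𝕜 p.2 x.1 - inner 𝕜 p.1 x.2 = 0} :=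
      isClosed_eq (by fun_prop) continuous_const
    exact fun a b hab => closure_minimal (fun p hp => hx p.1 p.2 hp) hclosed hab

end Submodule

namespace LinearPMap

variable {𝕜 E F : Type*} [RCLike 𝕜] [NormedAddCommGroup E] [InnerProductSpace 𝕜 E]
  [NormedAddCommGroup F] [InnerProductSpace 𝕜 F]

theorem mem_ker_sub_smul_subtype_iff (T : E →ₗ.[𝕜] E) (c : 𝕜) (y : T.domain) :
    y ∈ LinearMap.ker (T.toFun - c • T.domain.subtype) ↔ ((y : E), c • (y : E)) ∈ T.graph := by
  rw [LinearMap.mem_ker, LinearMap.sub_apply, sub_eq_zero, T.mem_graph_iff]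
  refine ⟨fun h => ⟨y, rfl, h⟩, ?_⟩
  rintro ⟨y', hy', h⟩
  rwa [Subtype.ext hy'] at h

theorem adjoint_closure [CompleteSpace E] {T : E →ₗ.[𝕜] F} (hT : Dense (T.domain : Set E))
    (hc : T.IsClosable) : T.closure† = T† := by
  have hT' : Dense (T.closure.domain : Set E) := hT.mono T.le_closure.1
  refine eq_of_eq_graph ?_
  rw [adjoint_graph_eq_graph_adjoint hT, adjoint_graph_eq_graph_adjoint hT',
    ← hc.graph_closure_eq_closure_graph, Submodule.adjoint_topologicalClosure]

theorem IsFormalAdjoint.isClosable [CompleteSpace E] {T : E →ₗ.[𝕜] F} {S : F →ₗ.[𝕜] E}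
    (hT : Dense (T.domain : Set E)) (h : T.IsFormalAdjoint S) : S.IsClosable :=
  isClosable_iff_exists_closed_extension.mpr ⟨T†, adjoint_isClosed hT, h.le_adjoint hT⟩

theorem IsFormalAdjoint.conj_eq_of_mem_graph {A : E →ₗ.[𝕜] E} (hA : A.IsFormalAdjoint A)
    {x : E} {c : 𝕜} (hx : (x, c • x) ∈ A.graph) (hx0 : x ≠ 0) : conj c = c := by
  obtain ⟨y, rfl, hy⟩ := A.mem_graph_iff.mp hx
  have h := hA y y
  rw [hy, inner_smul_left, inner_smul_right] at h
  exact mul_right_cancel₀ (inner_self_ne_zero.mpr hx0) h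

theorem not_isSelfAdjoint_closure [CompleteSpace E] {T : E →ₗ.[𝕜] E}
    (hT : Dense (T.domain : Set E)) (hsym : T.IsFormalAdjoint T) {x : E} {c : 𝕜}
    (hx : (x, c • x) ∈ T†.graph) (hx0 : x ≠ 0) (hc : conj c ≠ c) : ¬IsSelfAdjoint T.closure := by
  intro hA
  have hA' : T.closure† = T.closure := hA
  have hAsym := adjoint_isFormalAdjoint hA.dense_domain (T := T.closure)
  rw [hA'] at hAsym
  rw [← adjoint_closure hT (hsym.isClosable hT), hA'] at hx
  exact hc (hAsym.conj_eq_of_mem_graph hx hx0)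

end LinearPMap

def jacobiAct (b : ℕ → ℝ) (u : ℕ → ℂ) (m : ℕ) : ℂ :=
  b m * u (m + 1) + if m = 0 then 0 else b (m - 1) * u (m - 1)

@[simp]
theorem jacobiAct_zero (b : ℕ → ℝ) (u : ℕ → ℂ) : jacobiAct b u 0 = b 0 * u 1 := by
  simp [jacobiAct]

@[simp]
theorem jacobiAct_succ (b : ℕ → ℝ) (u : ℕ → ℂ) (k : ℕ) :
    jacobiAct b u (k + 1) = b (k + 1) * u (k + 2) + b k * u k := by
  simp [jacobiAct]

theorem sum_range_conj_mul_jacobiAct_sub (b : ℕ → ℝ) (x y : ℕ → ℂ) (N : ℕ) :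
    ∑ m ∈ range (N + 1), (conj (x m) * jacobiAct b y m - conj (jacobiAct b x m) * y m) =
      b N * (conj (x N) * y (N + 1) - conj (x (N + 1)) * y N) := by
  induction N with
  | zero => simp; ring
  | succ N ih => rw [sum_range_succ, ih]; simp; ring

theorem tsum_conj_jacobiAct_mul (b : ℕ → ℝ) {x : ℕ → ℂ} (hx : {m | x m ≠ 0}.Finite)
    (y : ℕ → ℂ) : ∑' m, conj (jacobiAct b x m) * y m = ∑' m, conj (x m) * jacobiAct b y m := by
  obtain ⟨N, hN⟩ : ∃ N, ∀ m ≥ N, x m = 0 := by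
    obtain ⟨M, hM⟩ := hx.bddAbove
    exact ⟨M + 1, fun m hm => by_contra fun h => absurd (hM h) (by omega)⟩
  have hJx : ∀ m ∉ range (N + 1), jacobiAct b x m = 0 := fun m hm => by
    obtain ⟨k, rfl⟩ : ∃ k, m = k + 1 := ⟨m - 1, by simp at hm; omega⟩
    simp only [mem_range, not_lt] at hm
    simp [hN k (by omega), hN (k + 2) (by omega)]
  rw [tsum_eq_sum (s := range (N + 1)) fun m hm => by simp [hJx m hm],
    tsum_eq_sum (s := range (N + 1)) fun m hm => by simp [hN m (by simp at hm; omega)],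
    eq_comm, ← sub_eq_zero, ← sum_sub_distrib, sum_range_conj_mul_jacobiAct_sub,
    hN N le_rfl, hN (N + 1) (by omega)]
  simp

def jacobiSol (b : ℕ → ℝ) (c : ℂ) : ℕ → ℂ
  | 0 => 1
  | 1 => c / b 0
  | k + 2 => (c * jacobiSol b c (k + 1) - b k * jacobiSol b c k) / b (k + 1)

section Recurrence

variable {b : ℕ → ℝ} {c : ℂ}

theorem jacobiAct_jacobiSol (hb : ∀ m, b m ≠ 0) :
    jacobiAct b (jacobiSol b c) = c • jacobiSol b c := by
  have hb' : ∀ m, (b m : ℂ) ≠ 0 := fun m => by exact_mod_cast hb m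
  funext m
  cases m with
  | zero => simp [jacobiSol, mul_div_cancel₀ _ (hb' 0)]
  | succ k => simp [jacobiSol, mul_div_cancel₀ _ (hb' (k + 1))]

theorem jacobiAct_eigen_ext (hb : ∀ m, b m ≠ 0) {u v : ℕ → ℂ} (hu : jacobiAct b u = c • u)
    (hv : jacobiAct b v = c • v) (h0 : u 0 = v 0) : u = v := by
  have hcancel : ∀ m {z w : ℂ}, (b m : ℂ) * z = b m * w → z = w := fun m _ _ h =>
    mul_left_cancel₀ (by exact_mod_cast hb m) h
  have key : ∀ k, u k = v k ∧ u (k + 1) = v (k + 1) := by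
    intro k
    induction k with
    | zero =>
      refine ⟨h0, hcancel 0 ?_⟩
      have hu0 := congrFun hu 0
      have hv0 := congrFun hv 0
      simp only [jacobiAct_zero, Pi.smul_apply, smul_eq_mul] at hu0 hv0
      rw [hu0, hv0, h0]
    | succ k ih =>
      refine ⟨ih.2, hcancel (k + 1) ?_⟩
      have huk := congrFun hu (k + 1)
      have hvk := congrFun hv (k + 1)
      simp only [jacobiAct_succ, Pi.smul_apply, smul_eq_mul] at huk hvk
      linear_combination huk - hvk + c * ih.2 - (b k : ℂ) * ih.1
  exact funext fun k => (key k).1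

theorem succ_mul_zero_le_of_log_concave {a : ℕ → ℝ} (ha : ∀ k, 0 < a k)
    (h : ∀ k, a k * a (k + 2) ≤ a (k + 1) ^ 2) (k : ℕ) : a (k + 1) * a 0 ≤ a 1 * a k := by
  induction k with
  | zero => rw [mul_comm]
  | succ k ih =>
    refine le_of_mul_le_mul_left ?_ (ha k)
    calc a k * (a (k + 2) * a 0) = a k * a (k + 2) * a 0 := by ring
      _ ≤ a (k + 1) ^ 2 * a 0 := by gcongr; exact (ha 0).le; exact h k
      _ = a (k + 1) * (a (k + 1) * a 0) := by ring
      _ ≤ a (k + 1) * (a 1 * a k) := by gcongr; exact (ha _).le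
      _ = a k * (a 1 * a (k + 1)) := by ring

theorem norm_mul_sqrt_abs_add_two_le (hb : ∀ m, b m ≠ 0)
    (hlc : ∀ m, |b m| * |b (m + 2)| ≤ |b (m + 1)| ^ 2) {u : ℕ → ℂ} (hu : jacobiAct b u = c • u)
    (k : ℕ) :
    ‖u (k + 2)‖ * √|b (k + 2)| ≤ ‖u k‖ * √|b k| +
      ‖c‖ * √(|b 1| / |b 0|) / |b (k + 1)| * (‖u (k + 1)‖ * √|b (k + 1)|) := by
  have hpos : ∀ m, 0 < |b m| := fun m => abs_pos.mpr (hb m)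
  have hrec : (b (k + 1) : ℂ) * u (k + 2) = c * u (k + 1) - b k * u k := by
    have := congrFun hu (k + 1)
    simp only [jacobiAct_succ, Pi.smul_apply, smul_eq_mul] at this
    linear_combination this
  have hnorm : |b (k + 1)| * ‖u (k + 2)‖ ≤ ‖c‖ * ‖u (k + 1)‖ + |b k| * ‖u k‖ := by
    have := norm_sub_le (c * u (k + 1)) (b k * u k)
    rwa [← hrec, norm_mul, norm_mul, norm_mul, Complex.norm_real, Complex.norm_real,
      Real.norm_eq_abs, Real.norm_eq_abs] at this
  have hratio : √|b (k + 2)| ≤ √(|b 1| / |b 0|) * √|b (k + 1)| := by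
    rw [← Real.sqrt_mul (div_nonneg (abs_nonneg _) (abs_nonneg _))]
    refine Real.sqrt_le_sqrt ?_
    rw [div_mul_eq_mul_div, le_div_iff₀ (hpos 0)]
    exact succ_mul_zero_le_of_log_concave hpos hlc (k + 1)
  have hconc : |b k| * √|b (k + 2)| ≤ √|b k| * |b (k + 1)| := by
    calc |b k| * √|b (k + 2)| = √|b k| * √(|b k| * |b (k + 2)|) := by
          rw [Real.sqrt_mul (abs_nonneg _), ← mul_assoc, Real.mul_self_sqrt (abs_nonneg _)]
      _ ≤ √|b k| * √(|b (k + 1)| ^ 2) := by gcongr; exact hlc k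
      _ = √|b k| * |b (k + 1)| := by rw [Real.sqrt_sq (abs_nonneg _)]
  have hb1 := hpos (k + 1)
  rw [← mul_le_mul_iff_of_pos_left hb1]
  calc |b (k + 1)| * (‖u (k + 2)‖ * √|b (k + 2)|)
      = |b (k + 1)| * ‖u (k + 2)‖ * √|b (k + 2)| := by ring
    _ ≤ (‖c‖ * ‖u (k + 1)‖ + |b k| * ‖u k‖) * √|b (k + 2)| := by gcongr
    _ = ‖c‖ * ‖u (k + 1)‖ * √|b (k + 2)| + ‖u k‖ * (|b k| * √|b (k + 2)|) := by ring
    _ ≤ ‖c‖ * ‖u (k + 1)‖ * (√(|b 1| / |b 0|) * √|b (k + 1)|) +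
          ‖u k‖ * (√|b k| * |b (k + 1)|) := by gcongr
    _ = |b (k + 1)| * (‖u k‖ * √|b k| +
          ‖c‖ * √(|b 1| / |b 0|) / |b (k + 1)| * (‖u (k + 1)‖ * √|b (k + 1)|)) := by
        field_simp
        ring

theorem exists_norm_mul_sqrt_abs_le (hb : ∀ m, b m ≠ 0)
    (hlc : ∀ m, |b m| * |b (m + 2)| ≤ |b (m + 1)| ^ 2) (hsum : Summable fun m => |b m|⁻¹)
    {u : ℕ → ℂ} (hu : jacobiAct b u = c • u) : ∃ K, ∀ k, ‖u k‖ * √|b k| ≤ K := by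
  set g : ℕ → ℝ := fun k => ‖u k‖ * √|b k|
  set ε : ℕ → ℝ := fun k => ‖c‖ * √(|b 1| / |b 0|) / |b (k + 1)|
  have hg : ∀ k, 0 ≤ g k := fun k => by positivity
  have hε : ∀ k, 0 ≤ ε k := fun k => by positivity
  have hεsum : Summable ε := by
    simpa [ε, div_eq_mul_inv] using
      ((summable_nat_add_iff 1).mpr hsum).mul_left (‖c‖ * √(|b 1| / |b 0|))
  have hstep : ∀ k ≥ 0, g (k + 1) + g (k + 2) ≤ (1 + ε k) * (g k + g (k + 1)) + 0 := by
    intro k _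
    have := norm_mul_sqrt_abs_add_two_le hb hlc hu k
    nlinarith [mul_nonneg (hε k) (hg k)]
  refine ⟨(g 0 + g 1) * Real.exp (∑' k, ε k), fun k => ?_⟩
  calc g k ≤ g k + g (k + 1) := le_add_of_nonneg_right (hg _)
    _ ≤ (g 0 + g (0 + 1) + ∑ i ∈ Ico 0 k, (0 : ℝ)) * Real.exp (∑ i ∈ Ico 0 k, ε i) :=
        discrete_gronwall (u := fun k => g k + g (k + 1)) (add_nonneg (hg _) (hg _)) hstep
          (fun k _ => hε k) (fun _ _ => le_rfl) (Nat.zero_le k)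
    _ ≤ (g 0 + g 1) * Real.exp (∑' k, ε k) := by
        simp only [sum_const_zero, add_zero, zero_add]
        gcongr
        exact hεsum.sum_le_tsum _ fun i _ => hε i

theorem memℓp_two_of_jacobiAct_eq_smul (hb : ∀ m, b m ≠ 0)
    (hlc : ∀ m, |b m| * |b (m + 2)| ≤ |b (m + 1)| ^ 2) (hsum : Summable fun m => |b m|⁻¹)
    {u : ℕ → ℂ} (hu : jacobiAct b u = c • u) : Memℓp u 2 := by
  obtain ⟨K, hK⟩ := exists_norm_mul_sqrt_abs_le hb hlc hsum hu
  refine memℓp_gen (Summable.of_nonneg_of_le (fun k => by positivity) (fun k => ?_)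
    (hsum.mul_left (K ^ 2)))
  have hpos : 0 < |b k| := abs_pos.mpr (hb k)
  have hsq : ‖u k‖ ^ 2 * |b k| ≤ K ^ 2 :=
    calc ‖u k‖ ^ 2 * |b k| = (‖u k‖ * √|b k|) ^ 2 := by rw [mul_pow, Real.sq_sqrt hpos.le]
      _ ≤ K ^ 2 := pow_le_pow_left₀ (by positivity) (hK k) 2
  rwa [ENNReal.toReal_ofNat, Real.rpow_two, ← div_eq_mul_inv, le_div_iff₀ hpos]

end Recurrence

namespace H1

theorem inner_eq_tsum (f g : H1) : ⟪f, g⟫ = ∑' m, conj (f m) * g m := by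
  simp [lp.inner_eq_tsum, mul_comm]

theorem dense_setOf_finite_support : Dense {u : H1 | {m | u m ≠ 0}.Finite} := by
  intro f
  refine mem_closure_of_tendsto (lp.hasSum_single ENNReal.ofNat_ne_top f)
    (Filter.Eventually.of_forall fun s => s.finite_toSet.subset fun m hm => ?_)
  by_contra hms
  apply hm
  simp only [lp.coeFn_sum, Finset.sum_apply, lp.coeFn_single]
  exact Finset.sum_eq_zero fun i hi => Pi.single_eq_of_ne (by rintro rfl; exact hms hi) _

theorem tsum_conj_single_mul (k : ℕ) (f : ℕ → ℂ) :
    ∑' m, conj ((lp.single 2 k (1 : ℂ) : H1) m) * f m = f k := by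
  rw [tsum_eq_single k fun m hm => by simp [hm]]
  simp

end H1

structure IsJacobiOperator (b : ℕ → ℝ) (J : H1 →ₗ.[ℂ] H1) : Prop where
  mem_domain_iff : ∀ u : H1, u ∈ J.domain ↔ {m : ℕ | u m ≠ 0}.Finite
  apply_eq : ∀ (u : J.domain) (m : ℕ), (J u : H1) m = jacobiAct b (u : H1) m

namespace IsJacobiOperator

variable {b : ℕ → ℝ} {J : H1 →ₗ.[ℂ] H1}

theorem dense_domain (hJ : IsJacobiOperator b J) : Dense (J.domain : Set H1) := by
  convert H1.dense_setOf_finite_support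
  exact Set.ext hJ.mem_domain_iff

theorem inner_apply_left (hJ : IsJacobiOperator b J) (x : J.domain) (y : H1) :
    ⟪(J x : H1), y⟫ = ∑' m, conj ((x : H1) m) * jacobiAct b y m := by
  rw [H1.inner_eq_tsum, ← tsum_conj_jacobiAct_mul b ((hJ.mem_domain_iff _).mp x.2)]
  simp only [hJ.apply_eq]

theorem isFormalAdjoint (hJ : IsJacobiOperator b J) : J.IsFormalAdjoint J := fun x y => by
  rw [hJ.inner_apply_left, H1.inner_eq_tsum]
  simp only [hJ.apply_eq]

theorem mem_adjoint_graph_iff (hJ : IsJacobiOperator b J) (y w : H1) :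
    (y, w) ∈ J.adjoint.graph ↔ jacobiAct b y = w := by
  rw [LinearPMap.adjoint_graph_eq_graph_adjoint hJ.dense_domain, Submodule.mem_adjoint_iff]
  simp only [LinearPMap.mem_graph_iff, sub_eq_zero, forall_exists_index, and_imp]
  refine ⟨fun h => funext fun k => ?_, fun h _ _ x hx hJx => ?_⟩
  · have hk : (lp.single 2 k (1 : ℂ) : H1) ∈ J.domain :=
      (hJ.mem_domain_iff _).mpr ((Set.finite_singleton k).subset fun m hm => by
        by_contra hmk
        exact hm (lp.single_apply_ne 2 k _ hmk))
    have := h _ _ ⟨_, hk⟩ rfl rfl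
    rwa [hJ.inner_apply_left, H1.inner_eq_tsum, H1.tsum_conj_single_mul,
      H1.tsum_conj_single_mul] at this
  · rw [← hx, ← hJx, hJ.inner_apply_left, H1.inner_eq_tsum, h]

theorem finrank_ker_adjoint_sub_smul_eq_one (hJ : IsJacobiOperator b J) (hb : ∀ m, b m ≠ 0)
    {c : ℂ} (hl2 : Memℓp (jacobiSol b c) 2) :
    Module.finrank ℂ (LinearMap.ker (J.adjoint.toFun - c • J.adjoint.domain.subtype)) = 1 := by
  set K := LinearMap.ker (J.adjoint.toFun - c • J.adjoint.domain.subtype)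
  have hK (y : K) :
      jacobiAct b ((y : J.adjoint.domain) : H1) = c • ⇑((y : J.adjoint.domain) : H1) := by
    rw [← lp.coeFn_smul, ← hJ.mem_adjoint_graph_iff, ← LinearPMap.mem_ker_sub_smul_subtype_iff]
    exact y.2
  set U : H1 := ⟨jacobiSol b c, hl2⟩
  have hU : (U, c • U) ∈ J.adjoint.graph :=
    (hJ.mem_adjoint_graph_iff _ _).mpr (jacobiAct_jacobiSol hb)
  obtain ⟨y, hyU, -⟩ := J.adjoint.mem_graph_iff.mp hU
  have hyK : y ∈ K := by
    rw [LinearPMap.mem_ker_sub_smul_subtype_iff, hyU]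
    exact hU
  have hy0 : (⟨y, hyK⟩ : K) ≠ 0 := fun h => by
    have : ((y : H1) : ℕ → ℂ) 0 = 0 := by
      rw [show y = 0 from congrArg Subtype.val h]
      rfl
    rw [hyU] at this
    exact one_ne_zero this
  refine (finrank_eq_one_iff_of_nonzero' _ hy0).mpr fun w =>
    ⟨((w : J.adjoint.domain) : H1) 0, ?_⟩
  refine Subtype.ext (Subtype.ext (lp.ext (jacobiAct_eigen_ext hb (hK _) (hK w) ?_)))
  change ((w : J.adjoint.domain) : H1) 0 • ((y : H1) : ℕ → ℂ) 0 = _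
  rw [hyU]
  exact mul_one _

end IsJacobiOperator

section Beta

variable {n : ℕ}

theorem abs_beta (hn : 2 ≤ n) (m : ℕ) :
    |beta m n| = 1 / 2 * √((m : ℝ) + 1) * ((m : ℝ) + n - 1) := by
  have hn' : (2 : ℝ) ≤ n := by exact_mod_cast hn
  rw [beta, abs_of_nonpos (mul_nonpos_of_nonneg_of_nonpos (by positivity) (by linarith))]
  ring

theorem beta_ne_zero (hn : 2 ≤ n) (m : ℕ) : beta m n ≠ 0 := by
  have hn' : (2 : ℝ) ≤ n := by exact_mod_cast hn
  rw [← abs_ne_zero, abs_beta hn]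
  have : 0 < √((m : ℝ) + 1) := by positivity
  have : (0 : ℝ) < m + n - 1 := by linarith [(m.cast_nonneg : (0 : ℝ) ≤ m)]
  positivity

theorem abs_beta_mul_abs_beta_le (hn : 2 ≤ n) (m : ℕ) :
    |beta m n| * |beta (m + 2) n| ≤ |beta (m + 1) n| ^ 2 := by
  have hn' : (2 : ℝ) ≤ n := by exact_mod_cast hn
  have hm : (0 : ℝ) ≤ m := m.cast_nonneg
  have hsqrt : √((m : ℝ) + 1) * √((m : ℝ) + 3) ≤ m + 2 := by
    rw [← Real.sqrt_mul (by positivity), ← Real.sqrt_sq (by positivity : (0 : ℝ) ≤ m + 2)]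
    exact Real.sqrt_le_sqrt (by nlinarith)
  have hpos : (0 : ℝ) ≤ (m + n - 1) * (m + n + 1) := by nlinarith
  simp only [abs_beta hn]
  push_cast
  rw [mul_pow, mul_pow, Real.sq_sqrt (by positivity)]
  calc 1 / 2 * √((m : ℝ) + 1) * (m + n - 1) * (1 / 2 * √((m : ℝ) + 2 + 1) * (m + 2 + n - 1))
      = 1 / 4 * (√((m : ℝ) + 1) * √((m : ℝ) + 3)) * ((m + n - 1) * (m + n + 1)) := by
        ring_nf
    _ ≤ 1 / 4 * (m + 2) * ((m + n - 1) * (m + n + 1)) := by gcongr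
    _ ≤ (1 / 2) ^ 2 * ((m : ℝ) + 1 + 1) * (m + 1 + n - 1) ^ 2 := by nlinarith

theorem summable_inv_abs_beta (hn : 2 ≤ n) : Summable fun m => |beta m n|⁻¹ := by
  have hn' : (2 : ℝ) ≤ n := by exact_mod_cast hn
  have hp : Summable fun m : ℕ => (((m : ℝ) + 1) ^ (3 / 2 : ℝ))⁻¹ := by
    simpa using (summable_nat_add_iff 1).mpr
      (Real.summable_nat_rpow_inv.mpr (by norm_num : (1 : ℝ) < 3 / 2))
  refine Summable.of_nonneg_of_le (fun m => inv_nonneg.mpr (abs_nonneg _)) (fun m => ?_)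
    (hp.mul_left 2)
  have hm : (0 : ℝ) ≤ m := m.cast_nonneg
  have h32 : ((m : ℝ) + 1) ^ (3 / 2 : ℝ) = ((m : ℝ) + 1) * √((m : ℝ) + 1) := by
    rw [show (3 / 2 : ℝ) = 1 + 1 / 2 by norm_num, Real.rpow_add (by positivity), Real.rpow_one,
      Real.sqrt_eq_rpow]
  have hs : 0 < √((m : ℝ) + 1) := by positivity
  have hlow : ((m : ℝ) + 1) * √((m : ℝ) + 1) / 2 ≤ |beta m n| := by
    rw [abs_beta hn]
    nlinarith
  calc |beta m n|⁻¹ ≤ (((m : ℝ) + 1) * √((m : ℝ) + 1) / 2)⁻¹ := inv_anti₀ (by positivity) hlow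
    _ = 2 * (((m : ℝ) + 1) ^ (3 / 2 : ℝ))⁻¹ := by rw [h32, inv_div, div_eq_mul_inv]

end Beta

/-- For `n ≥ 2`, the Jacobi operator `J_n` (with domain the finitely supported
sequences) is symmetric but not essentially self-adjoint, and both deficiency
indices equal `1`. -/
theorem Jn_symmetric_deficiency_indices_one
    (n : ℕ) (hn : 2 ≤ n)
    (J : H1 →ₗ.[ℂ] H1)
    (hdom : ∀ u : H1, u ∈ J.domain ↔ {m : ℕ | u m ≠ 0}.Finite)
    (hact : ∀ u : J.domain, ∀ m : ℕ, (J u : H1) m = jacobiActRow n (⇑(u : H1)) m) :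
    (∀ f g : J.domain, ⟪(J f : H1), ((g : H1))⟫ = ⟪((f : H1)), (J g : H1)⟫) ∧
    ¬ IsSelfAdjoint J.closure ∧
    Module.finrank ℂ
      (LinearMap.ker (J.adjoint.toFun - Complex.I • J.adjoint.domain.subtype)) = 1 ∧
    Module.finrank ℂ
      (LinearMap.ker (J.adjoint.toFun + Complex.I • J.adjoint.domain.subtype)) = 1 := by
  have hJ : IsJacobiOperator (beta · n) J := ⟨hdom, hact⟩
  have hb : ∀ m, beta m n ≠ 0 := beta_ne_zero hn
  have hl2 (c : ℂ) : Memℓp (jacobiSol (beta · n) c) 2 :=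
    memℓp_two_of_jacobiAct_eq_smul hb (abs_beta_mul_abs_beta_le hn) (summable_inv_abs_beta hn)
      (jacobiAct_jacobiSol hb)
  refine ⟨hJ.isFormalAdjoint, ?_, hJ.finrank_ker_adjoint_sub_smul_eq_one hb (hl2 _), ?_⟩
  · have hI : (starRingEnd ℂ) Complex.I ≠ Complex.I := by
      rw [Ne, Complex.conj_eq_iff_im, Complex.I_im]
      exact one_ne_zero
    exact LinearPMap.not_isSelfAdjoint_closure hJ.dense_domain hJ.isFormalAdjoint
      ((hJ.mem_adjoint_graph_iff ⟨_, hl2 Complex.I⟩ _).mpr (jacobiAct_jacobiSol hb))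
      (fun h => one_ne_zero (congrArg (⇑· 0) h)) hI
  · rw [← sub_neg_eq_add, ← neg_smul]
    exact hJ.finrank_ker_adjoint_sub_smul_eq_one hb (hl2 _)
end
end

section
/- The function $\varphi(t,x,y,\xi,\eta) = (xy - \xi\eta)\tanh t + (x\xi + y\eta)\,\mathrm{sech}\, t$ satisfies the eikonal equation $\partial_t \varphi + (\partial_x \varphi)(\partial_y \varphi) - xy = 0$ at every point $(t,x,y,\xi,\eta) \in \mathbb{R}^5$, together with the initial condition $\varphi(0,x,y,\xi,\eta) = x\xi + y\eta$. -/
/-!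
With `T = tanh t` and `S = sech t` one has `T' = S²` and `S' = -T S`, while `φ` is affine in each
of `x` and `y`. Substituting the three partial derivatives, every term of the eikonal expression
cancels except `x y (T² + S² - 1)`, which vanishes because `tanh² + sech² = 1`.
-/

noncomputable section

/-- The phase `φ(t,x,y,ξ,η) = (xy - ξη)·tanh t + (xξ + yη)·sech t`. -/
def phase (t x y ξ η : ℝ) : ℝ :=
  (x * y - ξ * η) * Real.tanh t + (x * ξ + y * η) * (Real.cosh t)⁻¹

open Real

theorem Real.tanh_sq_add_inv_cosh_sq (t : ℝ) : tanh t ^ 2 + (cosh t)⁻¹ ^ 2 = 1 := by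
  have hc : cosh t ≠ 0 := (cosh_pos t).ne'
  rw [tanh_eq_sinh_div_cosh]
  field_simp
  linear_combination -(cosh_sq_sub_sinh_sq t)

theorem Real.hasDerivAt_inv_cosh (t : ℝ) :
    HasDerivAt (fun s => (cosh s)⁻¹) (-(tanh t * (cosh t)⁻¹)) t :=
  ((hasDerivAt_cosh t).inv (cosh_pos t).ne').congr_deriv <| by
    rw [tanh_eq_sinh_div_cosh]
    ring

theorem Real.hasDerivAt_tanh (t : ℝ) : HasDerivAt tanh ((cosh t)⁻¹ ^ 2) t := by
  have hc : cosh t ≠ 0 := (cosh_pos t).ne'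
  have h := (hasDerivAt_sinh t).div (hasDerivAt_cosh t) hc
  rw [show sinh / cosh = tanh from funext fun s => (tanh_eq_sinh_div_cosh s).symm] at h
  refine h.congr_deriv ?_
  field_simp
  linear_combination cosh_sq_sub_sinh_sq t

theorem hasDerivAt_phase_time (t x y ξ η : ℝ) :
    HasDerivAt (fun s => phase s x y ξ η)
      ((x * y - ξ * η) * (cosh t)⁻¹ ^ 2 - (x * ξ + y * η) * (tanh t * (cosh t)⁻¹)) t :=
  (((hasDerivAt_tanh t).const_mul (x * y - ξ * η)).add
    ((hasDerivAt_inv_cosh t).const_mul (x * ξ + y * η))).congr_deriv (by ring)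

theorem hasDerivAt_phase_fst (t x y ξ η : ℝ) :
    HasDerivAt (fun a => phase t a y ξ η) (y * tanh t + ξ * (cosh t)⁻¹) x :=
  (((((hasDerivAt_id x).mul_const y).sub_const (ξ * η)).mul_const (tanh t)).add
    ((((hasDerivAt_id x).mul_const ξ).add_const (y * η)).mul_const (cosh t)⁻¹)).congr_deriv
    (by simp)

theorem hasDerivAt_phase_snd (t x y ξ η : ℝ) :
    HasDerivAt (fun b => phase t x b ξ η) (x * tanh t + η * (cosh t)⁻¹) y :=
  (((((hasDerivAt_id y).const_mul x).sub_const (ξ * η)).mul_const (tanh t)).add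
    ((((hasDerivAt_id y).mul_const η).const_add (x * ξ)).mul_const (cosh t)⁻¹)).congr_deriv
    (by simp)

theorem phase_zero (x y ξ η : ℝ) : phase 0 x y ξ η = x * ξ + y * η := by
  simp [phase]

/-- The phase `φ(t,x,y,ξ,η) = (xy-ξη) tanh t + (xξ+yη) sech t` satisfies the eikonal
equation `∂ₜφ + (∂ₓφ)(∂_yφ) - xy = 0` everywhere, with `φ(0,x,y,ξ,η) = xξ + yη`. -/
theorem phase_solves_eikonal_equation (t x y ξ η : ℝ) :
    deriv (fun s => phase s x y ξ η) t +
      deriv (fun a => phase t a y ξ η) x * deriv (fun b => phase t x b ξ η) y -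
      x * y = 0 ∧
    phase 0 x y ξ η = x * ξ + y * η := by
  refine ⟨?_, phase_zero x y ξ η⟩
  rw [(hasDerivAt_phase_time t x y ξ η).deriv, (hasDerivAt_phase_fst t x y ξ η).deriv,
    (hasDerivAt_phase_snd t x y ξ η).deriv]
  linear_combination x * y * tanh_sq_add_inv_cosh_sq t
end
end

section
/- Let $v$ be a Schwartz function on $\mathbb{R}^2$ with Fourier transform $\hat{v}(\xi,\eta) = \iint e^{-i(x\xi+y\eta)} v(x,y)\, dx\, dy$. Then for every $t \in (0, \pi/2)$ and all $(x,y) \in \mathbb{R}^2$: $(2\pi)^{-2} \sec^2 t \iint \exp\big(i[(x\xi + y\eta)\sec t - (xy + \xi\eta)\tan t]\big)\, \hat{v}(\xi,\eta)\, d\xi\, d\eta \cdot \cos t = (2\pi)^{-1} (\sin t)^{-1} \iint v(a,b) \exp\Big( i\, \frac{(xy + ab)\cos t - (ay + xb)}{\sin t} \Big)\, da\, db$; that is, the oscillatory-integral expression $(2\pi)^{-2}\sec t \iint e^{i[(x\xi+y\eta)\sec t - (xy+\xi\eta)\tan t]} \hat{v}(\xi,\eta)\, d\xi\, d\eta$ equals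 the gyrator transform $(2\pi)^{-1}(\sin t)^{-1} \iint v(a,b)\, e^{i((xy+ab)\cos t - (ay+xb))/\sin t}\, da\, db$. -/
noncomputable section

open MeasureTheory

/-- The Fourier transform of `v`, `v̂(ξ,η) = ∬ e^{-i(xξ+yη)} v(x,y) dx dy`. -/
def fourier2 (v : SchwartzMap (ℝ × ℝ) ℂ) (w : ℝ × ℝ) : ℂ :=
  ∫ q : ℝ × ℝ, Complex.exp (-Complex.I * ((q.1 : ℂ) * (w.1 : ℂ) + (q.2 : ℂ) * (w.2 : ℂ))) * v q

/-!
The phase `(x ξ + y η) sec t - (x y + ξ η) tan t` is bilinear in `(ξ, η)` up to the constant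
`x y tan t`, so the theorem reduces to
`∫ e^{i(α w₁ + β w₂ - c w₁ w₂)} v̂(w) dw = (2π / |c|) ∫ v(q) e^{i(α - q₁)(β - q₂)/c} dq`
with `α = x sec t`, `β = y sec t`, `c = tan t`. The left integral converges absolutely but the
double integral obtained by unfolding `v̂` does not, so we insert the damping factor
`e^{-ε |w|²}`: for `ε > 0` Fubini applies, and the `w`-integral is a Gaussian with a bilinear term,
computed in closed form by integrating out one variable after the other. As `ε → 0⁺` this
closed form converges, boundedly in `q`, to `(2π / |c|) e^{i(α - q₁)(β - q₂)/c}`: stationary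
phase is exact for a quadratic phase. Dominated convergence on both sides finishes the proof.
-/

open Complex Real Filter Topology FourierTransform

-- `ℝ × ℝ` carries the sup norm, so Mathlib's Fourier transform, which needs an inner product
-- space, is taken on `ℂ`; its kernel `e^{-2πi⟪z, w⟫}` accounts for the rescaling by `(2π)⁻¹`.
theorem fourier2_eq_fourier_comp_equivRealProd (v : SchwartzMap (ℝ × ℝ) ℂ) (w : ℝ × ℝ) :
    fourier2 v w = 𝓕 (SchwartzMap.compCLMOfContinuousLinearEquiv ℝ equivRealProdCLM v)
      ((2 * π)⁻¹ • measurableEquivRealProd.symm w) := by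
  rw [SchwartzMap.fourier_coe, Real.fourier_eq', fourier2,
    ← volume_preserving_equiv_real_prod.integral_comp']
  congr 1 with z
  simp only [measurableEquivRealProd_apply, smul_eq_mul]
  congr 2
  simp [Complex.inner]
  field_simp

theorem integrable_fourier2 (v : SchwartzMap (ℝ × ℝ) ℂ) : Integrable (fourier2 v) := by
  set u := SchwartzMap.compCLMOfContinuousLinearEquiv ℝ equivRealProdCLM v
  have hu : Integrable fun z : ℂ => 𝓕 u ((2 * π)⁻¹ • z) :=
    (SchwartzMap.integrable _).comp_smul (by positivity)
  rw [show fourier2 v = (fun z => 𝓕 u ((2 * π)⁻¹ • z)) ∘ measurableEquivRealProd.symm from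
    funext (fourier2_eq_fourier_comp_equivRealProd v)]
  exact (volume_preserving_equiv_real_prod.symm).integrable_comp_emb
    measurableEquivRealProd.symm.measurableEmbedding |>.mpr hu

theorem tendsto_integral_cexp_neg_mul_mul {α : Type*} [MeasurableSpace α] {μ : Measure α}
    {Q : α → ℝ} (hQ : ∀ a, 0 ≤ Q a) (hQm : Measurable Q) {F : α → ℂ} (hF : Integrable F μ) :
    Tendsto (fun ε : ℝ => ∫ a, cexp (-ε * Q a) * F a ∂μ) (𝓝[>] 0) (𝓝 (∫ a, F a ∂μ)) := by
  have hlim (a : α) : Tendsto (fun ε : ℝ => cexp (-ε * Q a) * F a) (𝓝[>] 0) (𝓝 (F a)) := by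
    have : Continuous fun ε : ℝ => cexp (-ε * Q a) * F a := by fun_prop
    simpa using this.tendsto 0 |>.mono_left nhdsWithin_le_nhds
  refine tendsto_integral_filter_of_dominated_convergence (‖F ·‖) ?_ ?_ hF.norm (.of_forall hlim)
  · exact .of_forall fun ε =>
      (by fun_prop : Measurable fun a => cexp (-ε * Q a)).aestronglyMeasurable.mul hF.1
  · filter_upwards [self_mem_nhdsWithin] with ε (hε : 0 < ε)
    refine .of_forall fun a => ?_
    rw [norm_mul, ← ofReal_neg, ← ofReal_mul, norm_exp_ofReal]
    exact mul_le_of_le_one_left (norm_nonneg _) (Real.exp_le_one_iff.2 (by nlinarith [hQ a]))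

theorem integrable_exp_neg_mul_sq_add_sq {ε : ℝ} (hε : 0 < ε) :
    Integrable fun w : ℝ × ℝ => Real.exp (-ε * (w.1 ^ 2 + w.2 ^ 2)) := by
  simpa [mul_add, Real.exp_add, Measure.volume_eq_prod] using
    (integrable_exp_neg_mul_sq hε).mul_prod (integrable_exp_neg_mul_sq hε)

theorem ofReal_cpow_one_div_two {r : ℝ} (hr : 0 ≤ r) : (r : ℂ) ^ (1 / 2 : ℂ) = (√r : ℝ) := by
  rw [Real.sqrt_eq_rpow, Complex.ofReal_cpow hr]
  norm_num

def bilinearGaussian (ε c A B : ℝ) : ℂ :=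
  (2 * π / √(4 * ε ^ 2 + c ^ 2) : ℝ) *
    cexp ((-ε * (A ^ 2 + B ^ 2) + I * (A * B * c)) / (4 * ε ^ 2 + c ^ 2))

theorem integral_cexp_gaussian_bilinear {ε : ℝ} (hε : 0 < ε) (c A B : ℝ) :
    ∫ w : ℝ × ℝ, cexp (-ε * (w.1 ^ 2 + w.2 ^ 2) + I * (A * w.1 + B * w.2 - c * w.1 * w.2)) =
      bilinearGaussian ε c A B := by
  have hε' : (ε : ℂ) ≠ 0 := mod_cast hε.ne'
  have hD : 0 < 4 * ε ^ 2 + c ^ 2 := by positivity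
  have hint : Integrable fun w : ℝ × ℝ =>
      cexp (-ε * (w.1 ^ 2 + w.2 ^ 2) + I * (A * w.1 + B * w.2 - c * w.1 * w.2)) := by
    refine (integrable_exp_neg_mul_sq_add_sq hε).mono' (by fun_prop) (.of_forall fun w => ?_)
    simp [Complex.norm_exp, ← ofReal_pow]
  set b : ℝ := ε + c ^ 2 / (4 * ε)
  have hb : 0 < b := by positivity
  have inner (ξ : ℝ) : ∫ η : ℝ, cexp (-ε * (ξ ^ 2 + η ^ 2) + I * (A * ξ + B * η - c * ξ * η)) =
      (√(π / ε) : ℝ) * cexp (-b * ξ ^ 2 + (I * A + B * c / (2 * ε)) * ξ + -(B ^ 2 / (4 * ε))) := by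
    have := integral_cexp_quadratic (b := -ε) (by simpa using hε) (I * (B - c * ξ))
      (-ε * ξ ^ 2 + I * A * ξ)
    simp only [neg_neg] at this
    rw [← ofReal_div, ofReal_cpow_one_div_two (by positivity)] at this
    convert this using 3
    · congr 1
      ring
    · simp only [b]
      push_cast
      field_simp
      linear_combination (-2 * ((B : ℂ) - c * ξ) ^ 2) * I_sq
  rw [Measure.volume_eq_prod, integral_prod _ (by rwa [← Measure.volume_eq_prod]),
    funext inner, integral_const_mul, integral_cexp_quadratic (by simpa using hb)]
  simp only [neg_neg]
  rw [← ofReal_div, ofReal_cpow_one_div_two (by positivity), ← mul_assoc, ← ofReal_mul,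
    ← Real.sqrt_mul (by positivity)]
  have hprod : π / ε * (π / b) = (2 * π) ^ 2 / (4 * ε ^ 2 + c ^ 2) := by
    simp only [b]; field_simp; ring
  rw [hprod, Real.sqrt_div' _ hD.le, Real.sqrt_sq (by positivity), bilinearGaussian]
  congr 2
  have hD' : (4 * ε ^ 2 + c ^ 2 : ℂ) ≠ 0 := mod_cast hD.ne'
  simp only [b]
  push_cast
  field_simp
  linear_combination (16 * ε ^ 2 * A ^ 2 : ℂ) * I_sq

theorem bilinearGaussian_zero (c A B : ℝ) :
    bilinearGaussian 0 c A B = (2 * π / |c| : ℝ) * cexp (I * (A * B / c)) := by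
  rcases eq_or_ne c 0 with rfl | hc
  · simp [bilinearGaussian]
  have hc' : (c : ℂ) ≠ 0 := mod_cast hc
  rw [bilinearGaussian]
  congr 2
  · simp [Real.sqrt_sq_eq_abs]
  · push_cast
    field_simp
    ring

theorem norm_bilinearGaussian_le {ε c : ℝ} (hε : 0 ≤ ε) (hc : c ≠ 0) (A B : ℝ) :
    ‖bilinearGaussian ε c A B‖ ≤ 2 * π / |c| := by
  have hD : 0 < 4 * ε ^ 2 + c ^ 2 := by positivity
  have hexp : ‖cexp ((-ε * (A ^ 2 + B ^ 2) + I * (A * B * c)) / (4 * ε ^ 2 + c ^ 2))‖ ≤ 1 := by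
    have hD' : (4 * ε ^ 2 + c ^ 2 : ℂ) = (4 * ε ^ 2 + c ^ 2 : ℝ) := by push_cast; rfl
    rw [norm_exp, Real.exp_le_one_iff, hD', div_ofReal_re]
    apply div_nonpos_of_nonpos_of_nonneg _ hD.le
    simp [← ofReal_pow]
    positivity
  have hpre : 2 * π / √(4 * ε ^ 2 + c ^ 2) ≤ 2 * π / |c| := by
    rw [← Real.sqrt_sq_eq_abs]
    gcongr
    nlinarith
  calc ‖bilinearGaussian ε c A B‖
      ≤ 2 * π / √(4 * ε ^ 2 + c ^ 2) * 1 := by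
        rw [bilinearGaussian, norm_mul, norm_real, Real.norm_of_nonneg (by positivity)]
        gcongr
    _ ≤ 2 * π / |c| := by rwa [mul_one]

theorem continuous_bilinearGaussian {c : ℝ} (hc : c ≠ 0) :
    Continuous fun p : ℝ × ℝ × ℝ => bilinearGaussian p.1 c p.2.1 p.2.2 := by
  have hD (ε : ℝ) : 0 < 4 * ε ^ 2 + c ^ 2 := by positivity
  have hD' (ε : ℝ) : (4 * ε ^ 2 + c ^ 2 : ℂ) ≠ 0 := mod_cast (hD ε).ne'
  unfold bilinearGaussian
  refine .mul (continuous_ofReal.comp (continuous_const.div (by fun_prop)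
    fun p => Real.sqrt_ne_zero'.2 (hD _))) (continuous_exp.comp
    (Continuous.div (by fun_prop) (by fun_prop) fun p => hD' p.1))

theorem tendsto_integral_mul_bilinearGaussian {c : ℝ} (hc : c ≠ 0) {g : ℝ × ℝ → ℂ}
    (hg : Integrable g) (α β : ℝ) :
    Tendsto (fun ε => ∫ q, g q * bilinearGaussian ε c (α - q.1) (β - q.2)) (𝓝[>] 0)
      (𝓝 (∫ q, g q * bilinearGaussian 0 c (α - q.1) (β - q.2))) := by
  have hcont := continuous_bilinearGaussian hc
  refine tendsto_integral_filter_of_dominated_convergence (fun q => 2 * π / |c| * ‖g q‖)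
    (.of_forall fun ε => hg.1.mul
      (hcont.comp (f := fun q : ℝ × ℝ => (ε, α - q.1, β - q.2)) (by fun_prop)).aestronglyMeasurable)
    ?_ (hg.norm.const_mul _) (.of_forall fun q => ?_)
  · filter_upwards [self_mem_nhdsWithin] with ε (hε : 0 < ε)
    refine .of_forall fun q => ?_
    rw [norm_mul, mul_comm]
    gcongr
    exact norm_bilinearGaussian_le hε.le hc _ _
  · have : Continuous fun ε => g q * bilinearGaussian ε c (α - q.1) (β - q.2) :=
      continuous_const.mul (hcont.comp (f := fun ε : ℝ => (ε, α - q.1, β - q.2)) (by fun_prop))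
    exact this.tendsto 0 |>.mono_left nhdsWithin_le_nhds

theorem integral_cexp_neg_mul_mul_fourier2 (v : SchwartzMap (ℝ × ℝ) ℂ) {ε : ℝ} (hε : 0 < ε)
    (c α β : ℝ) :
    ∫ w : ℝ × ℝ, cexp (-ε * ((w.1 ^ 2 + w.2 ^ 2 : ℝ) : ℂ)) *
        (cexp (I * (α * w.1 + β * w.2 - c * w.1 * w.2)) * fourier2 v w) =
      ∫ q, v q * bilinearGaussian ε c (α - q.1) (β - q.2) := by
  set F : ℝ × ℝ → ℝ × ℝ → ℂ := fun w q => cexp (-ε * (w.1 ^ 2 + w.2 ^ 2) +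
    I * (((α - q.1 : ℝ) : ℂ) * w.1 + ((β - q.2 : ℝ) : ℂ) * w.2 - c * w.1 * w.2)) * v q
  have hF : Integrable (Function.uncurry F) ((volume : Measure (ℝ × ℝ)).prod volume) := by
    refine ((integrable_exp_neg_mul_sq_add_sq hε).mul_prod v.integrable.norm).mono'
      (by fun_prop) (.of_forall fun ⟨w, q⟩ => ?_)
    simp [F, Complex.norm_exp, ← ofReal_pow]
  have hfourier (w : ℝ × ℝ) : cexp (-ε * ((w.1 ^ 2 + w.2 ^ 2 : ℝ) : ℂ)) *
      (cexp (I * (α * w.1 + β * w.2 - c * w.1 * w.2)) * fourier2 v w) = ∫ q, F w q := by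
    rw [fourier2, ← integral_const_mul, ← integral_const_mul]
    congr 1 with q
    rw [← mul_assoc, ← mul_assoc, ← Complex.exp_add, ← Complex.exp_add]
    congr 2
    push_cast
    ring
  simp_rw [hfourier]
  rw [integral_integral_swap hF]
  congr 1 with q
  rw [integral_mul_const, integral_cexp_gaussian_bilinear hε, mul_comm]

theorem integral_cexp_bilinear_mul_fourier2 (v : SchwartzMap (ℝ × ℝ) ℂ) {c : ℝ} (hc : c ≠ 0)
    (α β : ℝ) :
    ∫ w : ℝ × ℝ, cexp (I * (α * w.1 + β * w.2 - c * w.1 * w.2)) * fourier2 v w =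
      (2 * π / |c| : ℝ) * ∫ q, v q * cexp (I * ((α - q.1) * (β - q.2) / c)) := by
  have hint : Integrable fun w : ℝ × ℝ =>
      cexp (I * (α * w.1 + β * w.2 - c * w.1 * w.2)) * fourier2 v w :=
    (integrable_fourier2 v).bdd_mul (c := 1) (by fun_prop) (.of_forall fun w => by
      simp [norm_exp])
  have hlim := (tendsto_integral_cexp_neg_mul_mul (fun w => by positivity) (by fun_prop)
    hint).congr' (eventually_nhdsWithin_of_forall (s := Set.Ioi 0) fun ε hε =>
      integral_cexp_neg_mul_mul_fourier2 v hε c α β)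
  rw [tendsto_nhds_unique hlim (tendsto_integral_mul_bilinearGaussian hc v.integrable α β),
    ← integral_const_mul]
  simp_rw [bilinearGaussian_zero, ofReal_sub]
  congr 1 with q
  ring

theorem oscillatory_integral_eq_gyrator_of_sq_add_sq (v : SchwartzMap (ℝ × ℝ) ℂ) {co s : ℝ}
    (hco : 0 < co) (hs : 0 < s) (hcs : s ^ 2 + co ^ 2 = 1) (x y : ℝ) :
    (((2 * π) ^ 2)⁻¹ : ℝ) * ((co⁻¹ : ℝ) : ℂ) *
        ∫ w : ℝ × ℝ, cexp (I * ((x * w.1 + y * w.2) * ((co⁻¹ : ℝ) : ℂ) -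
          (x * y + w.1 * w.2) * ((s / co : ℝ) : ℂ))) * fourier2 v w =
      ((2 * π)⁻¹ : ℝ) * ((s⁻¹ : ℝ) : ℂ) *
        ∫ q : ℝ × ℝ, v q * cexp (I * (((x * y + q.1 * q.2) * (co : ℂ) -
          (q.1 * y + x * q.2)) / (s : ℂ))) := by
  have hc : 0 < s / co := div_pos hs hco
  have hco' : (co : ℂ) ≠ 0 := mod_cast hco.ne'
  have hs' : (s : ℂ) ≠ 0 := mod_cast hs.ne'
  have hsplit (w : ℝ × ℝ) : cexp (I * ((x * w.1 + y * w.2) * ((co⁻¹ : ℝ) : ℂ) -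
      (x * y + w.1 * w.2) * ((s / co : ℝ) : ℂ))) * fourier2 v w =
        cexp (-I * (x * y * (s / co) : ℝ)) * (cexp (I * ((x / co : ℝ) * w.1 +
          (y / co : ℝ) * w.2 - (s / co : ℝ) * w.1 * w.2)) * fourier2 v w) := by
    rw [← mul_assoc, ← Complex.exp_add]
    push_cast
    ring_nf
  have hkernel (q : ℝ × ℝ) : v q * cexp (I * (((x * y + q.1 * q.2) * (co : ℂ) -
      (q.1 * y + x * q.2)) / (s : ℂ))) = cexp (-I * (x * y * (s / co) : ℝ)) *
        (v q * cexp (I * (((x / co : ℝ) - q.1) * ((y / co : ℝ) - q.2) / (s / co : ℝ)))) := by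
    rw [mul_left_comm, ← Complex.exp_add]
    congr 2
    have hcs' : (s : ℂ) ^ 2 + (co : ℂ) ^ 2 = 1 := mod_cast hcs
    push_cast
    field_simp
    linear_combination (x * y : ℂ) * hcs'
  simp_rw [hsplit, hkernel]
  rw [integral_const_mul, integral_const_mul, integral_cexp_bilinear_mul_fourier2 v hc.ne',
    abs_of_pos hc]
  push_cast
  field_simp

/-- **Exact stationary phase for the gyrator.** For `0 < t < π/2`, the oscillatory
integral `(2π)⁻² sec t ∬ e^{i[(xξ+yη)sec t - (xy+ξη)tan t]} v̂(ξ,η) dξ dη` equals the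
gyrator transform `(2π)⁻¹(sin t)⁻¹ ∬ v(a,b) e^{i((xy+ab)cos t - (ay+xb))/sin t} da db`. -/
theorem gyrator_transform_eq_oscillatory_integral
    (v : SchwartzMap (ℝ × ℝ) ℂ) (t : ℝ) (ht : t ∈ Set.Ioo 0 (Real.pi / 2)) (x y : ℝ) :
    (((2 * Real.pi) ^ 2)⁻¹ : ℝ) * (((Real.cos t)⁻¹ : ℝ) : ℂ) *
        ∫ w : ℝ × ℝ, Complex.exp (Complex.I *
          ((((x : ℂ) * w.1 + (y : ℂ) * w.2)) * (((Real.cos t)⁻¹ : ℝ) : ℂ) -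
            (((x : ℂ) * y + (w.1 : ℂ) * w.2)) * ((Real.tan t : ℝ) : ℂ))) * fourier2 v w =
      ((2 * Real.pi)⁻¹ : ℝ) * (((Real.sin t)⁻¹ : ℝ) : ℂ) *
        ∫ q : ℝ × ℝ, v q * Complex.exp (Complex.I *
          ((((x : ℂ) * y + (q.1 : ℂ) * q.2) * ((Real.cos t : ℝ) : ℂ) -
            ((q.1 : ℂ) * y + (x : ℂ) * q.2)) / ((Real.sin t : ℝ) : ℂ))) := by
  obtain ⟨ht0, ht2⟩ := ht
  rw [Real.tan_eq_sin_div_cos]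
  exact oscillatory_integral_eq_gyrator_of_sq_add_sq v
    (cos_pos_of_mem_Ioo ⟨by linarith [pi_pos], ht2⟩) (sin_pos_of_pos_of_lt_pi ht0 (by linarith))
    (sin_sq_add_cos_sq t) x y
end
end

section
/- Let $h \in \mathbb{R}$ and let $(x, \xi) : I \to \mathbb{R}^2$ be a differentiable solution on an interval $I$ of Hamilton's equations for $p_0$: $\dot{x} = x\xi$, $\dot{\xi} = -\tfrac{3}{2}x^2 - \tfrac{1}{2}\xi^2 + \tfrac{3}{2}h$, and suppose $x(t) \ne 0$ for all $t \in I$. Fix $t_* \in I$ and set $C_0 = \tfrac{1}{2} x(t_*)\big(x(t_*)^2 + \xi(t_*)^2\big) - \tfrac{3}{2} h\, x(t_*)$. Then the function $w = 1/x$ satisfies the differential equation $\big(\dot{w}(t)\big)^2 = 2 C_0\, w(t)^3 + 3h\, w(t)^2 - 1$ for all $t \in I$. -/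
/-! The symbol `p₀(x, ξ) = ½x(x² + ξ²) - (3/2)hx` is conserved along its Hamiltonian flow, so on
the interval it equals its value `C₀` at `t⋆`. Since `ẇ = -ẋ/x² = -ξ/x`, the energy identity
`p₀(x, ξ) = C₀`, divided by `x³/2`, is exactly `ẇ² = 2C₀w³ + 3hw² - 1`. -/

/-- The Weyl symbol `p₀(x, ξ; h)` of the cubic generator. -/
noncomputable def cubicSymbol (h x ξ : ℝ) : ℝ := (1 / 2) * x * (x ^ 2 + ξ ^ 2) - (3 / 2) * h * x

theorem Convex.eq_of_hasDerivWithinAt_zero {𝕜 G : Type*} [RCLike 𝕜] [NormedAddCommGroup G]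
    [NormedSpace 𝕜 G] {f : 𝕜 → G} {s : Set 𝕜} (hs : Convex ℝ s)
    (hf : ∀ t ∈ s, HasDerivWithinAt f 0 s t) {a b : 𝕜} (ha : a ∈ s) (hb : b ∈ s) :
    f b = f a := by
  have := hs.norm_image_sub_le_of_norm_hasDerivWithin_le hf (C := 0) (by simp) ha hb
  rwa [zero_mul, norm_le_zero_iff, sub_eq_zero] at this

theorem hasDerivWithinAt_cubicSymbol_along_flow (h : ℝ) {x ξ : ℝ → ℝ} {s : Set ℝ} {t : ℝ}
    (hx : HasDerivWithinAt x (x t * ξ t) s t)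
    (hξ : HasDerivWithinAt ξ (-(3 / 2) * (x t) ^ 2 - (1 / 2) * (ξ t) ^ 2 + (3 / 2) * h) s t) :
    HasDerivWithinAt (fun s => cubicSymbol h (x s) (ξ s)) 0 s t := by
  unfold cubicSymbol
  convert! (((hx.pow 2).add (hξ.pow 2)).const_mul (1 / 2) |>.mul hx).sub
    (hx.const_mul (3 / 2 * h)) using 1
  · ext y
    simp only [Pi.mul_apply, Pi.sub_apply, Pi.add_apply, Pi.pow_apply]
    ring
  · simp only [Pi.add_apply, Pi.pow_apply]
    norm_num
    ring

theorem sq_neg_div_sq_eq_of_cubicSymbol_eq {h x ξ C : ℝ} (hx : x ≠ 0)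
    (hC : cubicSymbol h x ξ = C) :
    (-(x * ξ) / x ^ 2) ^ 2 = 2 * C * x⁻¹ ^ 3 + 3 * h * x⁻¹ ^ 2 - 1 := by
  subst hC
  simp only [cubicSymbol]
  field_simp
  ring

/-- Along a nonvanishing solution of Hamilton's equations for
`p₀(x,ξ;h) = ½x(x²+ξ²) - (3/2)hx` on an interval, the function `w = 1/x` satisfies
the Weierstrass-type differential equation `(ẇ)² = 2C₀w³ + 3hw² - 1`, where
`C₀` is the (conserved) value of `p₀` along the solution. -/
theorem reciprocal_satisfies_weierstrass_ode
    (h : ℝ) (I : Set ℝ) (hI : Convex ℝ I)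
    (x ξ : ℝ → ℝ)
    (hx : ∀ t ∈ I, HasDerivWithinAt x (x t * ξ t) I t)
    (hξ : ∀ t ∈ I, HasDerivWithinAt ξ
      (-(3 / 2) * (x t) ^ 2 - (1 / 2) * (ξ t) ^ 2 + (3 / 2) * h) I t)
    (hx0 : ∀ t ∈ I, x t ≠ 0)
    (tstar : ℝ) (htstar : tstar ∈ I)
    (C₀ : ℝ)
    (hC₀ : C₀ = (1 / 2) * x tstar * ((x tstar) ^ 2 + (ξ tstar) ^ 2) - (3 / 2) * h * x tstar) :
    ∀ t ∈ I, ∃ w' : ℝ,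
      HasDerivWithinAt (fun s => (x s)⁻¹) w' I t ∧
      w' ^ 2 = 2 * C₀ * ((x t)⁻¹) ^ 3 + 3 * h * ((x t)⁻¹) ^ 2 - 1 := by
  intro t ht
  have energy : cubicSymbol h (x t) (ξ t) = C₀ :=
    hC₀ ▸ hI.eq_of_hasDerivWithinAt_zero
      (fun s hs => hasDerivWithinAt_cubicSymbol_along_flow h (hx s hs) (hξ s hs)) htstar ht
  exact ⟨_, (hx t ht).inv (hx0 t ht), sq_neg_div_sq_eq_of_cubicSymbol_eq (hx0 t ht) energy⟩
end

section
/- Let $h > 0$, $a = \sqrt{5h}$, and let $u_0 : \mathbb{R} \to \mathbb{C}$ be continuously differentiable. On the open set $\Omega = \{ (t,x) \in \mathbb{R}^2 : x \sinh(at) + a \cosh(at) \ne 0 \}$, define $u(t,x) = \dfrac{a}{x \sinh(at) + a \cosh(at)}\; u_0\!\left( a\, \frac{x \cosh(at) + a \sinh(at)}{x \sinh(at) + a \cosh(at)} \right)$. Then $u$ satisfies $\partial_t u + (x^2 - 5h)\, \partial_x u + x\, u = 0$ on $\Omega$ (equivalently, $h D_t u + Q_2 u = 0$ where $Q_2 u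 = x^2 h D_x u - i h x u - 5 h^2 D_x u$ and $D = \tfrac{1}{i}\partial$), and $u(0,x) = u_0(x)$ for all $x \in \mathbb{R}$. -/
noncomputable section

/-- The exact propagator `e^{-itQ₂/h}u₀` of the model operator
`Q₂ = x²hDₓ - ihx - 5h²Dₓ`, with `a = √(5h)`:
`u(t,x) = a (x sinh(at) + a cosh(at))⁻¹ u₀(a (x cosh(at) + a sinh(at))/(x sinh(at) + a cosh(at)))`. -/
def q2Propagator (h : ℝ) (u₀ : ℝ → ℂ) (t x : ℝ) : ℂ :=
  let a := Real.sqrt (5 * h)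
  ((a / (x * Real.sinh (a * t) + a * Real.cosh (a * t)) : ℝ) : ℂ) *
    u₀ (a * ((x * Real.cosh (a * t) + a * Real.sinh (a * t)) /
      (x * Real.sinh (a * t) + a * Real.cosh (a * t))))

/-!
The propagator has the form `u(t,x) = m(t,x) • u₀(φ(t,x))`, where `φ(t,·)` is the Möbius map
transporting the Riccati flow `ẋ = x² - a²` back to time `0` (so `∂ₜφ + (x² - a²)∂ₓφ = 0`) and
`m = a / (x sinh(at) + a cosh(at))` is the square root of its Jacobian `∂ₓφ = m²`, which makes
`u(t,·)` transported as a half-density: `∂ₜm + (x² - a²)∂ₓm + x m = 0`. Product and chain rule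
then give the evolution equation.
-/

open Real

theorem transport_smul_comp {E : Type*} [NormedAddCommGroup E] [NormedSpace ℝ E]
    {m φ : ℝ → ℝ → ℝ} {g : ℝ → E} {g' : E} {t x mt mx φt φx v c : ℝ}
    (hmt : HasDerivAt (m · x) mt t) (hmx : HasDerivAt (m t ·) mx x)
    (hφt : HasDerivAt (φ · x) φt t) (hφx : HasDerivAt (φ t ·) φx x)
    (hg : HasDerivAt g g' (φ t x))
    (hm : mt + v * mx + c * m t x = 0) (hφ : φt + v * φx = 0) :
    deriv (fun s => m s x • g (φ s x)) t + v • deriv (fun z => m t z • g (φ t z)) x +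
      c • (m t x • g (φ t x)) = 0 := by
  have ht : HasDerivAt (fun s => m s x • g (φ s x)) _ t := hmt.smul (hg.scomp t hφt)
  have hx : HasDerivAt (fun z => m t z • g (φ t z)) _ x := hmx.smul (hg.scomp x hφx)
  rw [ht.deriv, hx.deriv]
  linear_combination (norm := module) hm • g (φ t x) + (m t x • hφ) • g'

namespace Riccati

variable (a t x : ℝ)

def denom : ℝ := x * sinh (a * t) + a * cosh (a * t)

def numer : ℝ := x * cosh (a * t) + a * sinh (a * t)

def amplitude : ℝ := a / denom a t x

def flow : ℝ := a * (numer a t x / denom a t x)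

theorem numer_sq_sub_denom_sq : numer a t x ^ 2 - denom a t x ^ 2 = x ^ 2 - a ^ 2 := by
  unfold numer denom
  linear_combination (x ^ 2 - a ^ 2) * cosh_sq_sub_sinh_sq (a * t)

theorem denom_mul_cosh_sub_numer_mul_sinh :
    denom a t x * cosh (a * t) - numer a t x * sinh (a * t) = a := by
  unfold numer denom
  linear_combination a * cosh_sq_sub_sinh_sq (a * t)

theorem hasDerivAt_denom_time : HasDerivAt (denom a · x) (a * numer a t x) t := by
  have hat : HasDerivAt (a * ·) a t := by simpa using (hasDerivAt_id t).const_mul a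
  exact ((((hasDerivAt_sinh _).comp t hat).const_mul x).add
    (((hasDerivAt_cosh _).comp t hat).const_mul a)).congr_deriv (by unfold numer; ring)

theorem hasDerivAt_numer_time : HasDerivAt (numer a · x) (a * denom a t x) t := by
  have hat : HasDerivAt (a * ·) a t := by simpa using (hasDerivAt_id t).const_mul a
  exact ((((hasDerivAt_cosh _).comp t hat).const_mul x).add
    (((hasDerivAt_sinh _).comp t hat).const_mul a)).congr_deriv (by unfold denom; ring)

theorem hasDerivAt_denom_space : HasDerivAt (denom a t ·) (sinh (a * t)) x := by
  simpa [denom] using ((hasDerivAt_id x).mul_const (sinh (a * t))).add_const (a * cosh (a * t))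

theorem hasDerivAt_numer_space : HasDerivAt (numer a t ·) (cosh (a * t)) x := by
  simpa [numer] using ((hasDerivAt_id x).mul_const (cosh (a * t))).add_const (a * sinh (a * t))

variable {a t x}

theorem hasDerivAt_amplitude_time (hD : denom a t x ≠ 0) :
    HasDerivAt (amplitude a · x) (-(a ^ 2 * numer a t x) / denom a t x ^ 2) t := by
  exact ((hasDerivAt_const t a).div (hasDerivAt_denom_time a t x) hD).congr_deriv (by ring)

theorem hasDerivAt_amplitude_space (hD : denom a t x ≠ 0) :
    HasDerivAt (amplitude a t ·) (-(a * sinh (a * t)) / denom a t x ^ 2) x := by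
  exact ((hasDerivAt_const x a).div (hasDerivAt_denom_space a t x) hD).congr_deriv (by ring)

theorem hasDerivAt_flow_time (hD : denom a t x ≠ 0) :
    HasDerivAt (flow a · x) (a ^ 2 * (a ^ 2 - x ^ 2) / denom a t x ^ 2) t := by
  refine (((hasDerivAt_numer_time a t x).div (hasDerivAt_denom_time a t x) hD).const_mul
    a).congr_deriv ?_
  linear_combination (-a ^ 2 / denom a t x ^ 2) * numer_sq_sub_denom_sq a t x

theorem hasDerivAt_flow_space (hD : denom a t x ≠ 0) :
    HasDerivAt (flow a t ·) (a ^ 2 / denom a t x ^ 2) x := by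
  refine (((hasDerivAt_numer_space a t x).div (hasDerivAt_denom_space a t x) hD).const_mul
    a).congr_deriv ?_
  linear_combination (a / denom a t x ^ 2) * denom_mul_cosh_sub_numer_mul_sinh a t x

theorem amplitude_transport (hD : denom a t x ≠ 0) :
    -(a ^ 2 * numer a t x) / denom a t x ^ 2 +
      (x ^ 2 - a ^ 2) * (-(a * sinh (a * t)) / denom a t x ^ 2) + x * amplitude a t x = 0 := by
  unfold amplitude
  field_simp
  unfold numer denom
  ring

theorem flow_transport :
    a ^ 2 * (a ^ 2 - x ^ 2) / denom a t x ^ 2 + (x ^ 2 - a ^ 2) * (a ^ 2 / denom a t x ^ 2) = 0 := by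
  ring

theorem amplitude_zero (ha : a ≠ 0) : amplitude a 0 x = 1 := by
  simp [amplitude, denom, ha]

theorem flow_zero (ha : a ≠ 0) : flow a 0 x = x := by
  simp only [flow, numer, denom, mul_zero, cosh_zero, sinh_zero, mul_one, add_zero, zero_add]
  field_simp

end Riccati

theorem q2Propagator_eq_smul (h : ℝ) (u₀ : ℝ → ℂ) (t x : ℝ) :
    q2Propagator h u₀ t x =
      Riccati.amplitude √(5 * h) t x • u₀ (Riccati.flow √(5 * h) t x) := by
  rw [Complex.real_smul]
  rfl

/-- On the open set `Ω = {(t,x) : x sinh(at) + a cosh(at) ≠ 0}` the propagator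
satisfies `∂ₜu + (x² - 5h)∂ₓu + x·u = 0` (i.e. `hDₜu + Q₂u = 0`), with initial
condition `u(0,·) = u₀`. -/
theorem q2Propagator_solves_evolution_equation
    (h : ℝ) (hh : 0 < h) (u₀ : ℝ → ℂ) (hu₀ : ContDiff ℝ 1 u₀) :
    (∀ t x : ℝ,
      x * Real.sinh (Real.sqrt (5 * h) * t) +
          Real.sqrt (5 * h) * Real.cosh (Real.sqrt (5 * h) * t) ≠ 0 →
      deriv (fun s => q2Propagator h u₀ s x) t +
        (((x ^ 2 - 5 * h : ℝ)) : ℂ) * deriv (fun z => q2Propagator h u₀ t z) x +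
        (x : ℂ) * q2Propagator h u₀ t x = 0) ∧
    (∀ x : ℝ, q2Propagator h u₀ 0 x = u₀ x) := by
  have ha : √(5 * h) ≠ 0 := (Real.sqrt_pos.2 (by positivity)).ne'
  have ha2 : √(5 * h) ^ 2 = 5 * h := Real.sq_sqrt (by positivity)
  refine ⟨fun t x hD => ?_, fun x => ?_⟩
  · have hm := Riccati.amplitude_transport hD
    have hφ := Riccati.flow_transport (a := √(5 * h)) (t := t) (x := x)
    have hv : x ^ 2 - 5 * h = x ^ 2 - √(5 * h) ^ 2 := by rw [ha2]
    simp only [q2Propagator_eq_smul, ← Complex.real_smul, hv]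
    exact transport_smul_comp (Riccati.hasDerivAt_amplitude_time hD)
      (Riccati.hasDerivAt_amplitude_space hD) (Riccati.hasDerivAt_flow_time hD)
      (Riccati.hasDerivAt_flow_space hD)
      ((hu₀.differentiable one_ne_zero) _).hasDerivAt hm hφ
  · rw [q2Propagator_eq_smul, Riccati.amplitude_zero ha, Riccati.flow_zero ha, one_smul]
end
end
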